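/- arXiv:1005.4512 — 2 statements merged into one kernel-verified Lean document; each statement's English description precedes it below -/
import Mathlib

section
/- Let g be a finite-dimensional Lie algebra over a field k of characteristic zero and let M, N be locally finite g-modules. Then the tensor product M ⊗ N, with the diagonal g-action x·(m ⊗ n) = (x·m) ⊗ n + m ⊗ (x·n), is a locally finite g-module. -/
/-!
A vector `v` is killed by a nonzero polynomial in `φ` iff it lies in a finite-dimensional
`φ`-invariant subspace: in one direction take the image of `k[X]` under `p ↦ p(φ) v`, which is spanned by
the images of the polynomials of degree below that of the annihilating one; in the other apply
Cayley–Hamilton to the restriction of `φ`. Now `x` acts on `M ⊗ N` by `A ⊗ 1 + 1 ⊗ B`, so if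
`m ∈ P` and `n ∈ Q` with `P`, `Q` finite-dimensional and invariant, then `m ⊗ n` lies in the image
of `P ⊗ Q`, which is finite-dimensional and invariant; sums of such subspaces are again so.
-/

open TensorProduct Polynomial

namespace Module.End

variable {k V : Type*} [Field k] [AddCommGroup V] [Module k V] {φ : Module.End k V}

def IsLocallyFinite (φ : Module.End k V) : Prop :=
  ∀ v : V, ∃ f : k[X], f ≠ 0 ∧ aeval φ f v = 0

theorem aeval_restrict_apply {W : Submodule k V} (hW : ∀ w ∈ W, φ w ∈ W) (f : k[X]) (w : W) :
    (aeval (φ.restrict hW) f w : V) = aeval φ f w := by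
  simp only [aeval_eq_sum_range, LinearMap.coe_sum, Finset.sum_apply, LinearMap.smul_apply,
    Submodule.coe_sum, Submodule.coe_smul]
  refine Finset.sum_congr rfl fun n _ ↦ ?_
  rw [pow_restrict, LinearMap.restrict_apply]

theorem exists_aeval_apply_eq_zero_of_mem {W : Submodule k V} [Module.Finite k W]
    (hW : W ∈ φ.invtSubmodule) {v : V} (hv : v ∈ W) : ∃ f : k[X], f ≠ 0 ∧ aeval φ f v = 0 := by
  rw [mem_invtSubmodule_iff_forall_mem_of_mem] at hW
  obtain ⟨f, hf, hf0⟩ := LinearMap.exists_monic_and_aeval_eq_zero k (φ.restrict hW)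
  refine ⟨f, hf.ne_zero, ?_⟩
  rw [← aeval_restrict_apply hW f ⟨v, hv⟩, hf0, LinearMap.zero_apply, Submodule.coe_zero]

theorem exists_mem_invtSubmodule_of_aeval_apply_eq_zero {v : V} {f : k[X]} (hf : f ≠ 0)
    (hfv : aeval φ f v = 0) : ∃ W ∈ φ.invtSubmodule, Module.Finite k W ∧ v ∈ W := by
  let θ : k[X] →ₗ[k] V := LinearMap.applyₗ v ∘ₗ (aeval φ).toLinearMap
  have hθ (p : k[X]) : θ p = aeval φ p v := rfl
  have hθ_mod (p : k[X]) : θ p = θ (p % f) := by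
    conv_lhs => rw [← EuclideanDomain.mod_add_div p f]
    rw [map_add, hθ (f * _), mul_comm, aeval_mul, Module.End.mul_apply, hfv, map_zero, add_zero]
  have hrange : LinearMap.range θ = (degreeLT k f.natDegree).map θ := by
    refine le_antisymm (fun _ ⟨p, hp⟩ ↦ ⟨p % f, ?_, by rw [← hp, ← hθ_mod]⟩)
      LinearMap.map_le_range
    exact mem_degreeLT.2 ((degree_mod_lt p hf).trans_le degree_le_natDegree)
  refine ⟨LinearMap.range θ, ?_, ?_, ⟨1, by simp [hθ]⟩⟩
  · rintro _ ⟨p, rfl⟩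
    exact ⟨X * p, by simp [hθ]⟩
  · rw [hrange]
    have := Module.Finite.equiv (degreeLTEquiv k f.natDegree).symm
    exact Module.Finite.map _ _

theorem isLocallyFinite_iff :
    φ.IsLocallyFinite ↔ ∀ v : V, ∃ W ∈ φ.invtSubmodule, Module.Finite k W ∧ v ∈ W := by
  refine forall_congr' fun v ↦ ⟨fun ⟨f, hf, hfv⟩ ↦ ?_, fun ⟨W, hW, _, hv⟩ ↦ ?_⟩
  · exact exists_mem_invtSubmodule_of_aeval_apply_eq_zero hf hfv
  · exact exists_aeval_apply_eq_zero_of_mem hW hv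

variable {M N : Type*} [AddCommGroup M] [Module k M] [AddCommGroup N] [Module k N]
  {A : Module.End k M} {B : Module.End k N}

theorem range_map_subtype_mem_invtSubmodule_rTensor_add_lTensor {P : Submodule k M}
    {Q : Submodule k N} (hP : P ∈ A.invtSubmodule) (hQ : Q ∈ B.invtSubmodule) :
    LinearMap.range (TensorProduct.map P.subtype Q.subtype) ∈
      invtSubmodule (A.rTensor N + B.lTensor M) := by
  refine invtSubmodule_inf_invtSubmodule_le_invtSubmodule_add _ _
    ⟨(?_ : _ ∈ invtSubmodule _), (?_ : _ ∈ invtSubmodule _)⟩ <;>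
    rw [mem_invtSubmodule_iff_map_le, ← LinearMap.range_comp]
  · rw [LinearMap.rTensor_comp_map, show A ∘ₗ P.subtype = P.subtype ∘ₗ A.restrict hP from rfl,
      ← LinearMap.map_comp_rTensor, LinearMap.range_comp]
    exact LinearMap.map_le_range
  · rw [LinearMap.lTensor_comp_map, show B ∘ₗ Q.subtype = Q.subtype ∘ₗ B.restrict hQ from rfl,
      ← LinearMap.map_comp_lTensor, LinearMap.range_comp]
    exact LinearMap.map_le_range

theorem IsLocallyFinite.rTensor_add_lTensor (hA : A.IsLocallyFinite) (hB : B.IsLocallyFinite) :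
    IsLocallyFinite (A.rTensor N + B.lTensor M) := by
  rw [isLocallyFinite_iff] at hA hB ⊢
  intro t
  induction t using TensorProduct.induction_on with
  | zero => exact ⟨⊥, invtSubmodule.bot_mem _, inferInstance, zero_mem _⟩
  | tmul m n =>
    obtain ⟨P, hP, _, hm⟩ := hA m
    obtain ⟨Q, hQ, _, hn⟩ := hB n
    exact ⟨_, range_map_subtype_mem_invtSubmodule_rTensor_add_lTensor hP hQ,
      Module.Finite.range _, ⟨⟨m, hm⟩ ⊗ₜ ⟨n, hn⟩, rfl⟩⟩
  | add s t hs ht =>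
    obtain ⟨W₁, hW₁, _, hs⟩ := hs
    obtain ⟨W₂, hW₂, _, ht⟩ := ht
    exact ⟨W₁ ⊔ W₂, invtSubmodule.sup_mem hW₁ hW₂, Submodule.finite_sup _ _,
      Submodule.add_mem_sup hs ht⟩

end Module.End

theorem tensorProduct_locally_finite_general
    (k : Type*) [Field k]
    (g : Type*) [LieRing g] [LieAlgebra k g]
    (M : Type*) [AddCommGroup M] [Module k M] [LieRingModule g M] [LieModule k g M]
    (N : Type*) [AddCommGroup N] [Module k N] [LieRingModule g N] [LieModule k g N]
    (hM : ∀ (x : g) (m : M), ∃ f : Polynomial k, f ≠ 0 ∧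
        (Polynomial.aeval (LieModule.toEnd k g M x) f) m = 0)
    (hN : ∀ (x : g) (n : N), ∃ f : Polynomial k, f ≠ 0 ∧
        (Polynomial.aeval (LieModule.toEnd k g N x) f) n = 0) :
    ∀ (x : g) (t : M ⊗[k] N), ∃ f : Polynomial k, f ≠ 0 ∧
        (Polynomial.aeval (LieModule.toEnd k g (M ⊗[k] N) x) f) t = 0 :=
  -- the action of `x` on `M ⊗[k] N` is `(toEnd x).rTensor N + (toEnd x).lTensor M` by definition
  fun x ↦ Module.End.IsLocallyFinite.rTensor_add_lTensor (hM x) (hN x)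

/-- The tensor product of two locally finite modules over a finite-dimensional Lie algebra
`g` over a field `k` of characteristic zero, equipped with the diagonal `g`-action
`x·(m ⊗ n) = (x·m) ⊗ n + m ⊗ (x·n)`, is again locally finite. -/
theorem tensorProduct_locally_finite
    (k : Type*) [Field k] [CharZero k]
    (g : Type*) [LieRing g] [LieAlgebra k g] [Module.Finite k g]
    (M : Type*) [AddCommGroup M] [Module k M] [LieRingModule g M] [LieModule k g M]
    (N : Type*) [AddCommGroup N] [Module k N] [LieRingModule g N] [LieModule k g N]
    (hM : ∀ (x : g) (m : M), ∃ f : Polynomial k, f ≠ 0 ∧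
        (Polynomial.aeval (LieModule.toEnd k g M x) f) m = 0)
    (hN : ∀ (x : g) (n : N), ∃ f : Polynomial k, f ≠ 0 ∧
        (Polynomial.aeval (LieModule.toEnd k g N x) f) n = 0) :
    ∀ (x : g) (t : M ⊗[k] N), ∃ f : Polynomial k, f ≠ 0 ∧
        (Polynomial.aeval (LieModule.toEnd k g (M ⊗[k] N) x) f) t = 0 :=
  tensorProduct_locally_finite_general k g M N hM hN
end

section
/- Let L be an additive abelian group and let c : L × L → ℂˣ be a function that is multiplicative in each argument (c(x+x′,y) = c(x,y)c(x′,y) and c(x,y+y′) = c(x,y)c(x,y′)) and satisfies c(x,x) = 1 for all x ∈ L. Then there exists a normalized 2-cocycle α : L × L → ℂˣ such that α(x,y)·α(y,x)⁻¹ = c(x,y) for all x, y ∈ L. -/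
/-!
Lift `c` along the projection `π : F → L` from the free abelian group `F = L →₀ ℤ`. After
well-ordering `L`, the bilinear form `B` on `F` with `B x y = c x y` for basis vectors `y < x`
and `0` otherwise satisfies `B - Bᵗ = c ∘ (π × π)`; in particular `B k v = B v k` for `k` in
`K = ker π`. Being bilinear, `B` is a 2-cocycle on `F`, and adding a coboundary `δψ` does not
change `B - Bᵗ`. The cocycle `B + δψ` is invariant under translation by `K`, hence descends to `L`,
as soon as `ψ (w + k) = ψ w + B k w + φ k` for a quadratic refinement `φ` of `B` on `K`. Such a
`φ` exists because `ℂˣ` is divisible, hence injective: the abelian extension of `K` by `ℂˣ` with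
the symmetric cocycle `B` splits, and minus a retraction restricted to `K` is the refinement.
Subtracting the constant `α 0 0` finally normalizes the cocycle.
-/

open Function

section Cocycle

variable {G F A : Type*} [AddCommGroup G] [AddCommGroup F] [AddCommGroup A]

def IsTwoCocycle (α : G → G → A) : Prop :=
  ∀ x y z, α x y + α (x + y) z = α y z + α x (y + z)

namespace IsTwoCocycle

variable {α : G → G → A}

theorem apply_zero_left (h : IsTwoCocycle α) (y : G) : α 0 y = α 0 0 := by
  have := h 0 0 y
  rw [zero_add, zero_add, add_left_inj] at this
  exact this.symm

theorem apply_zero_right (h : IsTwoCocycle α) (x : G) : α x 0 = α 0 0 := by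
  have := h x 0 0
  rwa [add_zero, add_zero, add_left_inj] at this

theorem exists_normalized (h : IsTwoCocycle α) :
    ∃ α' : G → G → A, IsTwoCocycle α' ∧ (∀ x, α' x 0 = 0) ∧ (∀ y, α' 0 y = 0) ∧
      ∀ x y, α' x y - α' y x = α x y - α y x :=
  ⟨fun x y => α x y - α 0 0, fun x y z => by simp only [sub_add_sub_comm, h x y z],
    fun x => sub_eq_zero.2 (h.apply_zero_right x), fun y => sub_eq_zero.2 (h.apply_zero_left y),
    fun x y => sub_sub_sub_cancel_right _ _ _⟩

theorem add_coboundary (h : IsTwoCocycle α) (ψ : G → A) :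
    IsTwoCocycle fun x y => α x y + (ψ x + ψ y - ψ (x + y)) := fun x y z => by
  simp only [add_assoc x y z]
  linear_combination (norm := abel) h x y z

theorem exists_comp_eq {β : F → F → A} (hβ : IsTwoCocycle β) {π : F →+ G} (hπ : Surjective π)
    (hl : ∀ u v k, π k = 0 → β (u + k) v = β u v) (hr : ∀ u v k, π k = 0 → β u (v + k) = β u v) :
    ∃ α : G → G → A, IsTwoCocycle α ∧ ∀ u v, α (π u) (π v) = β u v := by
  set s := surjInv hπ
  have hs : ∀ u, π (u - s (π u)) = 0 := fun u => by
    rw [map_sub, surjInv_eq hπ, sub_self]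
  have hβs : ∀ u v, β (s (π u)) (s (π v)) = β u v := fun u v => by
    rw [← hr _ _ _ (hs v), add_sub_cancel, ← hl _ v _ (hs u), add_sub_cancel]
  refine ⟨fun x y => β (s x) (s y), fun x y z => ?_, hβs⟩
  obtain ⟨u, rfl⟩ := hπ x
  obtain ⟨v, rfl⟩ := hπ y
  obtain ⟨w, rfl⟩ := hπ z
  simp only [← map_add, hβs]
  exact hβ u v w

end IsTwoCocycle

theorem AddMonoidHom.isTwoCocycle (B : G →+ G →+ A) : IsTwoCocycle fun x y => B x y :=
  fun x y z => by
    simp only [map_add, AddMonoidHom.add_apply]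
    abel

end Cocycle

theorem Module.Basis.exists_sub_flip_eq_of_isAlt {ι R M N : Type*} [CommRing R] [AddCommGroup M]
    [Module R M] [AddCommGroup N] [Module R N] (b : Basis ι R M) {C : M →ₗ[R] M →ₗ[R] N}
    (hC : C.IsAlt) : ∃ B : M →ₗ[R] M →ₗ[R] N, B - B.flip = C := by
  let : LinearOrder ι := IsWellOrder.linearOrder WellOrderingRel
  refine ⟨b.constr R fun i => b.constr R fun j => if j < i then C (b i) (b j) else 0,
    LinearMap.ext_basis b b fun i j => ?_⟩
  simp only [LinearMap.sub_apply, LinearMap.flip_apply, Basis.constr_basis]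
  rcases lt_trichotomy i j with h | rfl | h
  · simp [h, h.not_gt, hC.neg]
  · simp [hC.self_eq_zero]
  · simp [h, h.not_gt]

theorem exists_sub_swap_eq_comp_linearCombination {L A : Type*} [AddCommGroup L]
    [AddCommGroup A] (c : L →+ L →+ A) (hc : ∀ x, c x x = 0) :
    ∃ B : (L →₀ ℤ) →+ (L →₀ ℤ) →+ A, ∀ u v,
      B u v - B v u = c (Finsupp.linearCombination ℤ id u) (Finsupp.linearCombination ℤ id v) := by
  let cℤ : L →ₗ[ℤ] L →ₗ[ℤ] A := LinearMap.mk₂ ℤ (fun x y => c x y) (by simp) (by simp)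
    (by simp) (by simp)
  obtain ⟨B, hB⟩ := Finsupp.basisSingleOne.exists_sub_flip_eq_of_isAlt
    (C := cℤ.compl₁₂ (Finsupp.linearCombination ℤ id) (Finsupp.linearCombination ℤ id))
    fun u => hc _
  exact ⟨LinearMap.toAddMonoidHom'.comp B.toAddMonoidHom, fun u v => congr($hB u v)⟩

section QuadraticRefinement

variable {A K : Type*} [AddCommGroup A] [AddCommGroup K]

@[ext]
structure TwistedProd (B : K →+ K →+ A) where
  fst : A
  snd : K

namespace TwistedProd

variable {B : K →+ K →+ A}

instance : Add (TwistedProd B) := ⟨fun p q => ⟨p.fst + q.fst + B p.snd q.snd, p.snd + q.snd⟩⟩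

instance : Zero (TwistedProd B) := ⟨⟨0, 0⟩⟩

instance : Neg (TwistedProd B) := ⟨fun p => ⟨-p.fst + B p.snd p.snd, -p.snd⟩⟩

theorem add_def (p q : TwistedProd B) :
    p + q = ⟨p.fst + q.fst + B p.snd q.snd, p.snd + q.snd⟩ := rfl

instance : AddGroup (TwistedProd B) where
  add_assoc p q r := by
    ext
    · simp only [add_def, map_add, AddMonoidHom.add_apply]
      abel
    · exact add_assoc _ _ _
  zero_add p := by
    ext
    · change 0 + _ + B 0 _ = _
      simp
    · exact zero_add _
  add_zero p := by
    ext
    · change _ + 0 + B _ 0 = _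
      simp
    · exact add_zero _
  neg_add_cancel p := by
    ext
    · change -_ + B _ _ + _ + B (-_) _ = 0
      simp only [map_neg, AddMonoidHom.neg_apply]
      abel
    · exact neg_add_cancel _
  nsmul := nsmulRec
  zsmul := zsmulRec

abbrev addCommGroup (hB : ∀ k l, B k l = B l k) : AddCommGroup (TwistedProd B) where
  add_comm p q := by
    ext
    · simp only [add_def, hB p.snd, add_comm p.fst]
    · exact add_comm _ _

end TwistedProd

theorem exists_quadratic_refinement (hA : Module.Baer ℤ A) (B : K →+ K →+ A)
    (hB : ∀ k l, B k l = B l k) : ∃ φ : K → A, ∀ k l, φ (k + l) = φ k + φ l + B k l := by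
  let := TwistedProd.addCommGroup hB
  let ι : A →+ TwistedProd B :=
    AddMonoidHom.mk' (fun a => ⟨a, 0⟩) fun a b => by simp [TwistedProd.add_def]
  obtain ⟨r, hr⟩ := hA.extension_property_addMonoidHom ι
    (fun a b h => congrArg TwistedProd.fst h) (AddMonoidHom.id A)
  refine ⟨fun k => -r ⟨0, k⟩, fun k l => ?_⟩
  have h : (⟨0, k⟩ : TwistedProd B) + ⟨0, l⟩ = ι (B k l) + ⟨0, k + l⟩ := by
    simp [TwistedProd.add_def, ι]
  have h' := congrArg r h
  rw [map_add, map_add, ← AddMonoidHom.comp_apply, hr, AddMonoidHom.id_apply] at h'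
  simp only [eq_sub_of_add_eq' h'.symm]
  abel

end QuadraticRefinement

section Descent

variable {F L A : Type*} [AddCommGroup F] [AddCommGroup L] [AddCommGroup A] {B : F →+ F →+ A}

theorem exists_extend_quadratic_refinement {K : AddSubgroup F}
    (hB : ∀ k ∈ K, ∀ v, B k v = B v k) {φ : K → A}
    (hφ : ∀ k l : K, φ (k + l) = φ k + φ l + B k l) :
    ∃ ψ : F → A, ∀ w (k : K), ψ (w + k) = ψ w + B k w + φ k := by
  let r : F → F := fun w => (w : F ⧸ K).out
  let κ : F → K := fun w => ⟨-r w + w, QuotientAddGroup.eq.1 (QuotientAddGroup.out_eq' _)⟩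
  have hr : ∀ w (k : K), r (w + k) = r w := fun w k => by
    simp only [r, QuotientAddGroup.mk_add, (QuotientAddGroup.eq_zero_iff _).2 k.2, add_zero]
  have hκ : ∀ w (k : K), κ (w + k) = κ w + k := fun w k =>
    Subtype.ext (by simp only [κ, hr, AddSubgroup.coe_add, add_assoc])
  have hw : ∀ w, r w + κ w = w := fun w => add_neg_cancel_left _ _
  refine ⟨fun w => B (κ w) (r w) + φ (κ w), fun w k => ?_⟩
  have hkw : B k w = B (κ w) k + B k (r w) := by rw [← hB k k.2, ← map_add, add_comm, hw]
  simp only [hκ, hr, hφ, hkw, AddSubgroup.coe_add, map_add, AddMonoidHom.add_apply]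
  abel

theorem exists_isTwoCocycle_comp_sub_swap_eq (hA : Module.Baer ℤ A) {π : F →+ L}
    (hπ : Surjective π) (hB : ∀ k, π k = 0 → ∀ v, B k v = B v k) :
    ∃ α : L → L → A, IsTwoCocycle α ∧ ∀ u v, α (π u) (π v) - α (π v) (π u) = B u v - B v u := by
  obtain ⟨φ, hφ⟩ := exists_quadratic_refinement hA ((B.comp π.ker.subtype).compl₂ π.ker.subtype)
    fun k l => hB k k.2 l
  obtain ⟨ψ, hψ⟩ := exists_extend_quadratic_refinement (K := π.ker) hB hφ
  obtain ⟨α, hα, hαβ⟩ := (B.isTwoCocycle.add_coboundary ψ).exists_comp_eq hπ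
    (fun u v k hk => by
      simp only [add_right_comm u k v, hψ _ ⟨k, hk⟩, map_add, AddMonoidHom.add_apply]
      abel)
    (fun u v k hk => by
      simp only [← add_assoc u v k, hψ _ ⟨k, hk⟩, map_add, hB k hk u]
      abel)
  refine ⟨α, hα, fun u v => ?_⟩
  simp only [hαβ, add_comm v u]
  abel

end Descent

theorem exists_isTwoCocycle_sub_swap_eq {L A : Type*} [AddCommGroup L] [AddCommGroup A]
    (hA : Module.Baer ℤ A) (c : L →+ L →+ A) (hc : ∀ x, c x x = 0) :
    ∃ α : L → L → A, IsTwoCocycle α ∧ (∀ x, α x 0 = 0) ∧ (∀ y, α 0 y = 0) ∧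
      ∀ x y, α x y - α y x = c x y := by
  let π : (L →₀ ℤ) →+ L := (Finsupp.linearCombination ℤ id).toAddMonoidHom
  have hπ : Surjective π := fun x => ⟨Finsupp.single x 1, by simp [π]⟩
  obtain ⟨B, hB⟩ := exists_sub_swap_eq_comp_linearCombination c hc
  have hsymm : ∀ k, π k = 0 → ∀ v, B k v = B v k := fun k hk v =>
    sub_eq_zero.1 <| (hB k v).trans <| by
      rw [show Finsupp.linearCombination ℤ id k = 0 from hk, map_zero, AddMonoidHom.zero_apply]
  obtain ⟨α, hα, hαB⟩ := exists_isTwoCocycle_comp_sub_swap_eq hA hπ hsymm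
  obtain ⟨α', hα', hx0, h0y, hα'α⟩ := hα.exists_normalized
  refine ⟨α', hα', hx0, h0y, fun x y => ?_⟩
  obtain ⟨u, rfl⟩ := hπ x
  obtain ⟨v, rfl⟩ := hπ y
  rw [hα'α, hαB, hB]
  rfl

theorem Complex.surjective_units_zpow {n : ℤ} (hn : n ≠ 0) : Surjective fun u : ℂˣ => u ^ n :=
  fun z => ⟨Units.mk0 (exp (log z / n)) (exp_ne_zero _), Units.ext <| by
    rw [Units.val_zpow_eq_zpow_val, Units.val_mk0, ← exp_int_mul,
      mul_div_cancel₀ _ (by exact_mod_cast hn), exp_log z.ne_zero]⟩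

theorem Complex.baer_additive_units : Module.Baer ℤ (Additive ℂˣ) :=
  let := divisibleByOfSMulRightSurj (Additive ℂˣ) ℤ fun hn => surjective_units_zpow hn
  Module.Baer.of_divisible _

/-- Every alternating bimultiplicative function `c : L × L → ℂˣ` on an abelian group `L` is
the commutator function of some normalized 2-cocycle `α`. -/
theorem bimultiplicative_alternating_is_commutator_of_cocycle
    (L : Type*) [AddCommGroup L]
    (c : L → L → ℂˣ)
    (hmull : ∀ x x' y : L, c (x + x') y = c x y * c x' y)
    (hmulr : ∀ x y y' : L, c x (y + y') = c x y * c x y')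
    (hdiag : ∀ x : L, c x x = 1) :
    ∃ α : L → L → ℂˣ,
      (∀ x y z : L, α x y * α (x + y) z = α y z * α x (y + z)) ∧
      (∀ x : L, α x 0 = 1) ∧ (∀ y : L, α 0 y = 1) ∧
      (∀ x y : L, α x y * (α y x)⁻¹ = c x y) := by
  let cAdd : L →+ L →+ Additive ℂˣ :=
    AddMonoidHom.mk' (fun x => AddMonoidHom.mk' (fun y => .ofMul (c x y)) (hmulr x))
      fun x x' => AddMonoidHom.ext (hmull x x')
  obtain ⟨α, hα, hx0, h0y, hαc⟩ :=
    exists_isTwoCocycle_sub_swap_eq Complex.baer_additive_units cAdd hdiag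
  exact ⟨fun x y => (α x y).toMul, hα, hx0, h0y, hαc⟩
end
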